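/- Fix n, g ∈ ℕ and functions k, r : (Fin n → Bool) → ℕ. Assume: (1) |k(S) − k(S')| ≤ 1 for every pair of adjacent states S, S'; (2) k(S) ≤ k(S_A) for every state S with exactly one true coordinate and k(S) ≤ k(S_B) for every state S with exactly one false coordinate (adequacy); and (3) k(S_A) + k(S_B) = n + 2 − 2g. Then ⟨n,k,r⟩ ≠ 0 and span(⟨n,k,r⟩) = 4n − 4g + 4. -/

import Mathlib

open Finset

noncomputable section

/-- The ring `(ℤ[z])[A, A⁻¹]`: Laurent polynomials in `A` over `ℤ[z]`. -/
abbrev LP := LaurentPolynomial (Polynomial ℤ)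

/-- The homological variable `z`. -/
def zz : LP := LaurentPolynomial.C Polynomial.X

/-- `a(S)`: the number of `A`-smoothings (coordinates where `S` is `false`). -/
def aCount {n : ℕ} (S : Fin n → Bool) : ℕ := (Finset.univ.filter fun i => S i = false).card

/-- `b(S)`: the number of `B`-smoothings (coordinates where `S` is `true`). -/
def bCount {n : ℕ} (S : Fin n → Bool) : ℕ := (Finset.univ.filter fun i => S i = true).card

/-- Two states are adjacent if they differ in exactly one coordinate. -/
def Adjacent {n : ℕ} (S S' : Fin n → Bool) : Prop :=
  ∃ i : Fin n, S' = Function.update S i (!(S i))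

/-- The bracket state sum
`⟨n,k,r⟩ = Σ_S A^(a(S)-b(S)) · (-A⁻² - A²)^(k S) · z^(r S)` in `(ℤ[z])[A,A⁻¹]`,
where `A^m = LaurentPolynomial.T m`. -/
def bracket (n : ℕ) (k r : (Fin n → Bool) → ℕ) : LP :=
  ∑ S : Fin n → Bool,
    LaurentPolynomial.T ((aCount S : ℤ) - (bCount S : ℤ)) *
      (-(LaurentPolynomial.T (-2)) - LaurentPolynomial.T 2) ^ (k S) * zz ^ (r S)


/-!
The contribution `A^(a-b) δ^k z^r` of a state, with `δ = -A⁻² - A²`, has its `A`-exponents in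
`[a - b - 2k, a - b + 2k]` and coefficient `±z^r` at both ends. Switching one `B`-smoothing of a
state to an `A`-smoothing raises `a - b` by `2` and, by the adjacency bound, lowers `k` by at most
`1`; starting from adequacy at the states with `b = 1`, induction on `b` shows that the top
exponent `a - b + 2k` of every state other than `S_A` is strictly below `n + 2 k(S_A)`. So the top
coefficient of the bracket is `±z^(r S_A)` in degree `n + 2 k(S_A)`. The substitution `A ↦ A⁻¹`
exchanges `S_A` and `S_B`, so the bottom degree is `-n - 2 k(S_B)`, and the Euler characteristic
identity turns the difference into `4n - 4g + 4`.
-/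

open LaurentPolynomial Polynomial

lemma LaurentPolynomial.coeff_mul_T {R : Type*} [Semiring R] (p : R[T;T⁻¹]) (m d : ℤ) :
    (p * T m).coeff d = p.coeff (d - m) := by
  rw [T, AddMonoidAlgebra.coeff_mul_single_apply, mul_one, sub_eq_add_neg]

lemma LaurentPolynomial.max'_support_coeff_eq {R : Type*} [Semiring R] {p : R[T;T⁻¹]} {D : ℤ}
    (hD : p.coeff D ≠ 0) (h : ∀ d, D < d → p.coeff d = 0) (hp : p.coeff.support.Nonempty) :
    p.coeff.support.max' hp = D :=
  le_antisymm
    (max'_le _ _ _ fun d hd => not_lt.mp fun hlt => Finsupp.mem_support_iff.mp hd (h d hlt))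
    (le_max' _ _ (Finsupp.mem_support_iff.mpr hD))

lemma LaurentPolynomial.min'_support_coeff_eq {R : Type*} [Semiring R] {p : R[T;T⁻¹]} {D : ℤ}
    (hD : p.coeff D ≠ 0) (h : ∀ d, d < D → p.coeff d = 0) (hp : p.coeff.support.Nonempty) :
    p.coeff.support.min' hp = D :=
  le_antisymm (min'_le _ _ (Finsupp.mem_support_iff.mpr hD))
    (le_min' _ _ _ fun d hd => not_lt.mp fun hlt => Finsupp.mem_support_iff.mp hd (h d hlt))

def loopValue : LP := -T (-2) - T 2

def stateTerm (m : ℤ) (k r : ℕ) : LP := T m * loopValue ^ k * zz ^ r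

lemma coeff_mul_loopValue (p : LP) (d : ℤ) :
    (p * loopValue).coeff d = -p.coeff (d + 2) - p.coeff (d - 2) := by
  have : p * loopValue = -(p * T (-2)) - p * T 2 := by rw [loopValue]; ring
  simp [this, coeff_mul_T]

lemma coeff_stateTerm_zero_loops (m d : ℤ) (r : ℕ) :
    (stateTerm m 0 r).coeff d = if d = m then X ^ r else 0 := by
  rw [stateTerm, pow_zero, mul_one, T_mul, coeff_mul_T, zz, ← map_pow, C_apply]
  simp only [sub_eq_zero]

lemma stateTerm_succ (m : ℤ) (k r : ℕ) :
    stateTerm m (k + 1) r = stateTerm m k r * loopValue := by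
  simp only [stateTerm]
  ring

lemma coeff_stateTerm_eq_zero {m d : ℤ} {k : ℕ} (r : ℕ) (h : m + 2 * k < d) :
    (stateTerm m k r).coeff d = 0 := by
  induction k generalizing d with
  | zero => simp only [coeff_stateTerm_zero_loops]; grind
  | succ k ih =>
    push_cast at h
    rw [stateTerm_succ, coeff_mul_loopValue, ih (by omega), ih (by omega), neg_zero, sub_zero]

lemma coeff_stateTerm_top (m : ℤ) (k r : ℕ) :
    (stateTerm m k r).coeff (m + 2 * k) = (-1) ^ k * X ^ r := by
  induction k with
  | zero => simp [coeff_stateTerm_zero_loops]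
  | succ k ih =>
    rw [stateTerm_succ, coeff_mul_loopValue, coeff_stateTerm_eq_zero _ (by push_cast; omega),
      show m + 2 * (k + 1 : ℕ) - 2 = m + 2 * k by push_cast; ring, ih]
    ring

lemma invert_stateTerm (m : ℤ) (k r : ℕ) : invert (stateTerm m k r) = stateTerm (-m) k r := by
  have : invert loopValue = loopValue := by simp [loopValue]; ring
  simp [stateTerm, this, zz]

section States

variable {n : ℕ}

lemma aCount_add_bCount (S : Fin n → Bool) : aCount S + bCount S = n := by
  simpa [aCount, bCount] using
    card_filter_add_card_filter_not (s := univ) (p := fun i => S i = false)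

lemma bCount_eq_zero_iff {S : Fin n → Bool} : bCount S = 0 ↔ S = fun _ => false := by
  simp [bCount, filter_eq_empty_iff, funext_iff]

lemma bCount_update_false {S : Fin n → Bool} {i : Fin n} (h : S i = true) :
    bCount (Function.update S i false) + 1 = bCount S := by
  have : univ.filter (fun j => Function.update S i false j = true) =
      (univ.filter fun j => S j = true).erase i := by
    ext j
    rcases eq_or_ne j i with rfl | hj <;> simp [*]
  rw [bCount, bCount, this, card_erase_add_one (by simp [h])]

@[simp] lemma aCount_not (S : Fin n → Bool) : aCount (fun i => !S i) = bCount S := by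
  simp [aCount, bCount]

@[simp] lemma bCount_not (S : Fin n → Bool) : bCount (fun i => !S i) = aCount S := by
  simp [aCount, bCount]

@[simp] lemma aCount_const_false : aCount (fun _ : Fin n => false) = n := by simp [aCount]

@[simp] lemma bCount_const_false : bCount (fun _ : Fin n => false) = 0 := by simp [bCount]

lemma Adjacent.not {S S' : Fin n → Bool} (h : Adjacent S S') :
    Adjacent (fun i => !S i) (fun i => !S' i) := by
  obtain ⟨i, rfl⟩ := h
  refine ⟨i, funext fun j => ?_⟩
  rcases eq_or_ne j i with rfl | hj
  · simp
  · simp [Function.update_of_ne hj]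

end States

section Adequacy

variable {n : ℕ} {k : (Fin n → Bool) → ℕ} (hk : ∀ S S', Adjacent S S' → k S ≤ k S' + 1)
  (hA : ∀ S, bCount S = 1 → k S ≤ k fun _ => false)
include hk hA

lemma add_one_le_add_bCount {S : Fin n → Bool} (hS : S ≠ fun _ => false) :
    k S + 1 ≤ k (fun _ => false) + bCount S := by
  induction hb : bCount S generalizing S with
  | zero => exact absurd (bCount_eq_zero_iff.mp hb) hS
  | succ b ih =>
    rcases Nat.eq_zero_or_pos b with rfl | hb_pos
    · have := hA S hb
      omega
    obtain ⟨i, hi⟩ : ∃ i, S i = true := by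
      by_contra! h
      exact hS (funext fun i => by simpa using h i)
    have h_update := bCount_update_false hi
    have h_ne : Function.update S i false ≠ fun _ => false := by
      rw [ne_eq, ← bCount_eq_zero_iff]
      omega
    have := ih h_ne (by omega)
    have : k S ≤ k (Function.update S i false) + 1 := hk S _ ⟨i, by rw [hi]; rfl⟩
    omega

lemma exponent_lt_of_ne_const_false {S : Fin n → Bool} (hS : S ≠ fun _ => false) :
    (aCount S - bCount S : ℤ) + 2 * k S < n + 2 * k (fun _ => false) := by
  have := add_one_le_add_bCount hk hA hS
  have := aCount_add_bCount S
  omega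

end Adequacy

section Bracket

variable {n : ℕ} (r : (Fin n → Bool) → ℕ)

lemma bracket_eq_sum_stateTerm (k : (Fin n → Bool) → ℕ) :
    bracket n k r = ∑ S, stateTerm (aCount S - bCount S) (k S) (r S) := rfl

lemma coeff_bracket (k : (Fin n → Bool) → ℕ) (d : ℤ) :
    (bracket n k r).coeff d = ∑ S, (stateTerm (aCount S - bCount S) (k S) (r S)).coeff d := by
  rw [bracket_eq_sum_stateTerm, AddMonoidAlgebra.coeff_sum, Finsupp.finsetSum_apply]

lemma invert_bracket (k : (Fin n → Bool) → ℕ) :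
    invert (bracket n k r) =
      bracket n (fun S => k fun i => !S i) (fun S => r fun i => !S i) := by
  have h_inv : Function.Involutive fun (S : Fin n → Bool) i => !S i :=
    fun S => funext fun i => Bool.not_not (S i)
  rw [bracket_eq_sum_stateTerm, bracket_eq_sum_stateTerm, map_sum]
  refine Fintype.sum_equiv h_inv.toPerm _ _ fun S => ?_
  simp [invert_stateTerm]

lemma coeff_bracket_neg (k : (Fin n → Bool) → ℕ) (d : ℤ) :
    (bracket n k r).coeff (-d) =
      (bracket n (fun S => k fun i => !S i) (fun S => r fun i => !S i)).coeff d := by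
  rw [← invert_bracket, invert_apply]

variable {k : (Fin n → Bool) → ℕ} (hk : ∀ S S', Adjacent S S' → k S ≤ k S' + 1)
include hk

section Top

variable (hA : ∀ S, bCount S = 1 → k S ≤ k fun _ => false)
include hA

lemma coeff_bracket_eq_zero_of_lt {d : ℤ} (hd : n + 2 * k (fun _ => false) < d) :
    (bracket n k r).coeff d = 0 := by
  rw [coeff_bracket]
  refine sum_eq_zero fun S _ => coeff_stateTerm_eq_zero _ ?_
  rcases eq_or_ne S (fun _ => false) with rfl | hS
  · simpa using hd
  · exact (exponent_lt_of_ne_const_false hk hA hS).trans hd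

lemma coeff_bracket_top :
    (bracket n k r).coeff (n + 2 * k (fun _ => false)) =
      (-1) ^ k (fun _ => false) * X ^ r (fun _ => false) := by
  rw [coeff_bracket, sum_eq_single (fun _ => false)]
  · simpa using coeff_stateTerm_top (n : ℤ) (k fun _ => false) (r fun _ => false)
  · exact fun S _ hS => coeff_stateTerm_eq_zero _ (exponent_lt_of_ne_const_false hk hA hS)
  · simp

lemma bracket_ne_zero : bracket n k r ≠ 0 := by
  intro h
  simpa [h] using coeff_bracket_top r hk hA

lemma max'_support_bracket (hne : (bracket n k r).coeff.support.Nonempty) :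
    (bracket n k r).coeff.support.max' hne = n + 2 * k (fun _ => false) :=
  max'_support_coeff_eq (by simp [coeff_bracket_top r hk hA])
    (fun _ => coeff_bracket_eq_zero_of_lt r hk hA) hne

end Top

lemma min'_support_bracket (hB : ∀ S, aCount S = 1 → k S ≤ k fun _ => true)
    (hne : (bracket n k r).coeff.support.Nonempty) :
    (bracket n k r).coeff.support.min' hne = -(n + 2 * k (fun _ => true)) := by
  have hk_not (S S' : Fin n → Bool) (h : Adjacent S S') :
      k (fun i => !S i) ≤ k (fun i => !S' i) + 1 :=
    hk _ _ h.not
  have hA_not (S : Fin n → Bool) (h : bCount S = 1) :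
      k (fun i => !S i) ≤ k fun _ => !false := by
    simpa using hB _ (by simpa using h)
  refine min'_support_coeff_eq ?_ (fun d hd => ?_) hne
  · have := coeff_bracket_top (fun S => r fun i => !S i) hk_not hA_not
    simp only [Bool.not_false] at this
    rw [coeff_bracket_neg, this]
    simp
  · rw [← neg_neg d, coeff_bracket_neg]
    exact coeff_bracket_eq_zero_of_lt _ hk_not hA_not (by simp; omega)

end Bracket

/-- Theorem 3.9: under the adjacency bound on `k`, adequacy, and the Euler
characteristic identity `k(S_A) + k(S_B) = n + 2 - 2g`, the bracket `⟨n,k,r⟩` is nonzero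
and its span equals `4n - 4g + 4`. -/
theorem span_bracket_alternating (n g : ℕ) (k r : (Fin n → Bool) → ℕ)
    (hk : ∀ S S' : Fin n → Bool, Adjacent S S' → |(k S : ℤ) - (k S' : ℤ)| ≤ 1)
    (hA : ∀ S : Fin n → Bool, bCount S = 1 → k S ≤ k (fun _ => false))
    (hB : ∀ S : Fin n → Bool, aCount S = 1 → k S ≤ k (fun _ => true))
    (hEuler : (k (fun _ => false) : ℤ) + (k (fun _ => true) : ℤ) = (n : ℤ) + 2 - 2 * g) :
    ∃ h0 : bracket n k r ≠ 0,
      (bracket n k r).coeff.support.max'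
          (Finsupp.support_nonempty_iff.mpr (mt AddMonoidAlgebra.coeff_eq_zero.mp h0)) -
        (bracket n k r).coeff.support.min'
          (Finsupp.support_nonempty_iff.mpr (mt AddMonoidAlgebra.coeff_eq_zero.mp h0)) =
        4 * (n : ℤ) - 4 * g + 4 := by
  have hk' (S S' : Fin n → Bool) (h : Adjacent S S') : k S ≤ k S' + 1 := by
    have := abs_le.mp (hk S S' h)
    omega
  refine ⟨bracket_ne_zero r hk' hA, ?_⟩
  rw [max'_support_bracket r hk' hA, min'_support_bracket r hk' hB]
  linarith
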